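/- arXiv:2401.12590 — 6 statements merged into one kernel-verified Lean document; each statement's English description precedes it below -/
import Mathlib

section
/- Let P(Ã) = Σ_{k=0}^K α_k Ã^k be a polynomial graph filter and E = [E_U; E_I] an embedding matrix. Then the top m rows of P(Ã)·E equal Σ_{2k ≤ K} α_{2k} · G̃_U^k · E_U + Σ_{2k+1 ≤ K} α_{2k+1} · R̃ · G̃_I^k · E_I, and the bottom n rows of P(Ã)·E equal Σ_{2k ≤ K} α_{2k} · G̃_I^k · E_I + Σ_{2k+1 ≤ K} α_{2k+1} · G̃_I^k · R̃ᵀ · E_U. -/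
open Matrix

lemma sum_range_even_odd {M : Type*} [AddCommMonoid M] (f : ℕ → M) (N : ℕ) :
    ∑ k ∈ Finset.range N, f k
      = (∑ k ∈ Finset.range ((N + 1) / 2), f (2 * k))
        + ∑ k ∈ Finset.range (N / 2), f (2 * k + 1) := by
  induction N with
  | zero => simp
  | succ N ih =>
    rcases Nat.even_or_odd N with ⟨t, ht⟩ | ⟨t, ht⟩
    · have h1 : (N + 1 + 1) / 2 = (N + 1) / 2 + 1 := by omega
      have h2 : (N + 1) / 2 = N / 2 := by omega
      have h3 : 2 * ((N+1)/2) = N := by omega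
      rw [Finset.sum_range_succ, ih, h1, Finset.sum_range_succ, h2,
        show 2 * (N / 2) = N by omega, add_right_comm]
    · have h1 : (N + 1 + 1) / 2 = (N + 1) / 2 := by omega
      have h2 : (N + 1) / 2 = N / 2 + 1 := by omega
      have h3 : 2 * (N/2) + 1 = N := by omega
      rw [Finset.sum_range_succ, ih, h2, h1, h2, Finset.sum_range_succ,
        Finset.sum_range_succ, show 2 * (N / 2) + 1 = N by omega]
      abel

lemma block_pow_even {m n : ℕ} (R : Matrix (Fin m) (Fin n) ℝ) (k : ℕ) :
    (fromBlocks 0 R Rᵀ 0) ^ (2 * k)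
      = fromBlocks ((R * Rᵀ) ^ k) 0 0 ((Rᵀ * R) ^ k) := by
  induction k with
  | zero => simp [fromBlocks_one]
  | succ k ih =>
    rw [show 2 * (k+1) = 2*k + 1 + 1 by ring, pow_succ, pow_succ, ih, pow_succ, pow_succ]
    simp [fromBlocks_multiply, Matrix.mul_assoc]

lemma block_pow_odd {m n : ℕ} (R : Matrix (Fin m) (Fin n) ℝ) (k : ℕ) :
    (fromBlocks 0 R Rᵀ 0) ^ (2 * k + 1)
      = fromBlocks 0 (R * (Rᵀ * R) ^ k) ((Rᵀ * R) ^ k * Rᵀ) 0 := by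
  rw [pow_succ, block_pow_even]
  have hcomm : (R * Rᵀ) ^ k * R = R * (Rᵀ * R) ^ k := by
    induction k with
    | zero => simp
    | succ k ih => rw [pow_succ, pow_succ, Matrix.mul_assoc, ← Matrix.mul_assoc R, ← ih]
                   simp [Matrix.mul_assoc]
  simp [fromBlocks_multiply, hcomm]

/-- For the polynomial graph filter `P(Ã) = Σ_{k=0}^K α_k Ã^k` applied to the embedding
matrix `E = [E_U; E_I]`, the top `m` rows of `P(Ã)·E` equal
`Σ_{2k ≤ K} α_{2k} G̃_U^k E_U + Σ_{2k+1 ≤ K} α_{2k+1} R̃ G̃_I^k E_I`, and the bottom `n`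
rows equal `Σ_{2k ≤ K} α_{2k} G̃_I^k E_I + Σ_{2k+1 ≤ K} α_{2k+1} G̃_I^k R̃ᵀ E_U`. -/
theorem polynomial_filter_applied_to_embeddings
    (m n d : ℕ) (hm : 0 < m) (hn : 0 < n) (hd : 0 < d)
    (R : Matrix (Fin m) (Fin n) ℝ)
    (EU : Matrix (Fin m) (Fin d) ℝ) (EI : Matrix (Fin n) (Fin d) ℝ)
    (K : ℕ) (α : ℕ → ℝ) :
    toRows₁ ((∑ k ∈ Finset.range (K + 1), α k • (fromBlocks 0 R Rᵀ 0) ^ k) * fromRows EU EI)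
      = (∑ k ∈ Finset.range (K / 2 + 1), α (2 * k) • ((R * Rᵀ) ^ k * EU))
        + (∑ k ∈ Finset.range ((K + 1) / 2), α (2 * k + 1) • (R * (Rᵀ * R) ^ k * EI))
        ∧
    toRows₂ ((∑ k ∈ Finset.range (K + 1), α k • (fromBlocks 0 R Rᵀ 0) ^ k) * fromRows EU EI)
      = (∑ k ∈ Finset.range (K / 2 + 1), α (2 * k) • ((Rᵀ * R) ^ k * EI))
        + (∑ k ∈ Finset.range ((K + 1) / 2), α (2 * k + 1) • ((Rᵀ * R) ^ k * Rᵀ * EU)) := by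
  have key : ((∑ k ∈ Finset.range (K + 1), α k • (fromBlocks 0 R Rᵀ 0) ^ k) * fromRows EU EI)
      = fromRows
        ((∑ k ∈ Finset.range (K / 2 + 1), α (2 * k) • ((R * Rᵀ) ^ k * EU))
          + (∑ k ∈ Finset.range ((K + 1) / 2), α (2 * k + 1) • (R * (Rᵀ * R) ^ k * EI)))
        ((∑ k ∈ Finset.range (K / 2 + 1), α (2 * k) • ((Rᵀ * R) ^ k * EI))
          + (∑ k ∈ Finset.range ((K + 1) / 2), α (2 * k + 1) • ((Rᵀ * R) ^ k * Rᵀ * EU))) := by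
    rw [Matrix.sum_mul]
    rw [sum_range_even_odd (fun k => α k • (fromBlocks 0 R Rᵀ 0) ^ k * fromRows EU EI) (K + 1)]
    have hN1 : (K + 1 + 1) / 2 = K / 2 + 1 := by omega
    rw [hN1]
    have e1 : ∀ k, α (2*k) • (fromBlocks 0 R Rᵀ 0) ^ (2*k) * fromRows EU EI
        = fromRows (α (2*k) • ((R * Rᵀ) ^ k * EU)) (α (2*k) • ((Rᵀ * R) ^ k * EI)) := by
      intro k
      rw [Matrix.smul_mul, block_pow_even, fromBlocks_mul_fromRows]
      ext (i|i) j <;> simp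
    have e2 : ∀ k, α (2*k+1) • (fromBlocks 0 R Rᵀ 0) ^ (2*k+1) * fromRows EU EI
        = fromRows (α (2*k+1) • (R * (Rᵀ * R) ^ k * EI))
            (α (2*k+1) • ((Rᵀ * R) ^ k * Rᵀ * EU)) := by
      intro k
      rw [Matrix.smul_mul, block_pow_odd, fromBlocks_mul_fromRows]
      ext (i|i) j <;> simp
    simp only [e1, e2]
    ext (i|i) j <;> simp [Matrix.sum_apply]
  rw [key, toRows₁_fromRows, toRows₂_fromRows]
  exact ⟨rfl, rfl⟩
end

section
/- (Theorem 1, general form.) Define the reconstructed matrix R* = [P(Ã)E]_U · ([P(Ã)E]_I)ᵀ ∈ ℝ^{m×n}, where P(Ã) = Σ_{k=0}^K α_k Ã^k, and [·]_U and [·]_I denote the top m rows and bottom n rows respectively. Then there exist matrices L, V ∈ ℝ^{n×d}, each of which is a linear combination (with real coefficients determined only by α_0, …, α_K) of the matrices G̃_I^k · E_I and G̃_I^k · R̃ᵀ · E_U for 0 ≤ k ≤ K, such that R* = α_0 · E_U · Vᵀ + R̃ · L · Vᵀ. -/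
open Matrix

lemma my_sum_range_even_odd {M : Type*} [AddCommMonoid M] (f : ℕ → M) :
    ∀ N : ℕ, ∑ k ∈ Finset.range N, f k
      = (∑ j ∈ Finset.range ((N+1)/2), f (2*j)) + ∑ j ∈ Finset.range (N/2), f (2*j+1) := by
  intro N
  induction N with
  | zero => simp
  | succ n ih =>
    rcases Nat.even_or_odd n with ⟨t, ht⟩ | ⟨t, ht⟩
    · rw [Finset.sum_range_succ, ih,
        show (n+1)/2 = t from by omega, show n/2 = t from by omega,
        show (n+1+1)/2 = t+1 from by omega,
        Finset.sum_range_succ (fun j => f (2*j)) t, show 2*t = n from by omega]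
      abel
    · rw [Finset.sum_range_succ, ih,
        show (n+1)/2 = t+1 from by omega, show n/2 = t from by omega,
        show (n+1+1)/2 = t+1 from by omega,
        Finset.sum_range_succ (fun j => f (2*j+1)) t, show 2*t+1 = n from by omega]
      abel

variable {m n d : ℕ} (R : Matrix (Fin m) (Fin n) ℝ)

lemma my_conjpow : ∀ j : ℕ, (R*Rᵀ)^j * R = R * (Rᵀ*R)^j := by
  intro j
  induction j with
  | zero => simp
  | succ j ih =>
    calc (R*Rᵀ)^(j+1) * R = (R*Rᵀ)^j * R * (Rᵀ*R) := by
          rw [pow_succ]; simp only [Matrix.mul_assoc]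
      _ = R * (Rᵀ*R)^j * (Rᵀ*R) := by rw [ih]
      _ = R * (Rᵀ*R)^(j+1) := by rw [pow_succ, Matrix.mul_assoc]

lemma my_conjpow_succ (j : ℕ) : (R*Rᵀ)^(j+1) = R * (Rᵀ*R)^j * Rᵀ := by
  rw [pow_succ, ← Matrix.mul_assoc, my_conjpow]

lemma my_blockpow_even : ∀ j : ℕ, (fromBlocks 0 R Rᵀ 0)^(2*j)
    = fromBlocks ((R*Rᵀ)^j) 0 0 ((Rᵀ*R)^j) := by
  intro j
  induction j with
  | zero => simp [fromBlocks_one]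
  | succ j ih =>
    rw [show 2*(j+1) = 2*j + 1 + 1 from by ring, pow_succ, pow_succ, ih, fromBlocks_multiply,
      fromBlocks_multiply]
    simp [pow_succ, Matrix.mul_assoc]

lemma my_blockpow_odd (j : ℕ) : (fromBlocks 0 R Rᵀ 0)^(2*j+1)
    = fromBlocks 0 (R*(Rᵀ*R)^j) ((Rᵀ*R)^j * Rᵀ) 0 := by
  rw [pow_succ, my_blockpow_even, fromBlocks_multiply, my_conjpow]
  simp

lemma my_toRows₁_sum {ι : Type*} (s : Finset ι) (f : ι → Matrix (Fin m ⊕ Fin n) (Fin d) ℝ) :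
    toRows₁ (∑ i ∈ s, f i) = ∑ i ∈ s, toRows₁ (f i) := by
  ext i j; simp [Matrix.sum_apply]

lemma my_toRows₂_sum {ι : Type*} (s : Finset ι) (f : ι → Matrix (Fin m ⊕ Fin n) (Fin d) ℝ) :
    toRows₂ (∑ i ∈ s, f i) = ∑ i ∈ s, toRows₂ (f i) := by
  ext i j; simp [Matrix.sum_apply]

lemma my_toRows₁_smul (c : ℝ) (M : Matrix (Fin m ⊕ Fin n) (Fin d) ℝ) :
    toRows₁ (c • M) = c • toRows₁ M := rfl

lemma my_toRows₂_smul (c : ℝ) (M : Matrix (Fin m ⊕ Fin n) (Fin d) ℝ) :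
    toRows₂ (c • M) = c • toRows₂ M := rfl

lemma my_main (K : ℕ) (α : ℕ → ℝ) {m n d : ℕ}
    (R : Matrix (Fin m) (Fin n) ℝ) (EU : Matrix (Fin m) (Fin d) ℝ)
    (EI : Matrix (Fin n) (Fin d) ℝ) :
    toRows₁ ((∑ k ∈ Finset.range (K + 1), α k • (fromBlocks 0 R Rᵀ 0) ^ k) * fromRows EU EI)
      * (toRows₂ ((∑ k ∈ Finset.range (K + 1), α k • (fromBlocks 0 R Rᵀ 0) ^ k) * fromRows EU EI))ᵀ
    = α 0 • (EU * ((∑ k ∈ Finset.range (K + 1),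
            (if 2*k < K+1 then α (2*k) else 0) • ((Rᵀ * R) ^ k * EI))
          + (∑ k ∈ Finset.range (K + 1),
            (if 2*k+1 < K+1 then α (2*k+1) else 0) • ((Rᵀ * R) ^ k * Rᵀ * EU)))ᵀ)
      + R * ((∑ k ∈ Finset.range (K + 1),
            (if 2*k+1 < K+1 then α (2*k+1) else 0) • ((Rᵀ * R) ^ k * EI))
          + (∑ k ∈ Finset.range (K + 1),
            (if 2*k+2 < K+1 then α (2*k+2) else 0) • ((Rᵀ * R) ^ k * Rᵀ * EU)))
        * ((∑ k ∈ Finset.range (K + 1),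
            (if 2*k < K+1 then α (2*k) else 0) • ((Rᵀ * R) ^ k * EI))
          + (∑ k ∈ Finset.range (K + 1),
            (if 2*k+1 < K+1 then α (2*k+1) else 0) • ((Rᵀ * R) ^ k * Rᵀ * EU)))ᵀ := by
  have e1 : (Finset.range (K+1)).filter (fun k => 2*k < K+1) = Finset.range ((K+2)/2) := by
    ext k; simp only [Finset.mem_filter, Finset.mem_range]; omega
  have e2 : (Finset.range (K+1)).filter (fun k => 2*k+1 < K+1) = Finset.range ((K+1)/2) := by
    ext k; simp only [Finset.mem_filter, Finset.mem_range]; omega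
  have e3 : (Finset.range (K+1)).filter (fun k => 2*k+2 < K+1) = Finset.range (K/2) := by
    ext k; simp only [Finset.mem_filter, Finset.mem_range]; omega
  have hV : (∑ k ∈ Finset.range (K + 1),
            (if 2*k < K+1 then α (2*k) else 0) • ((Rᵀ * R) ^ k * EI))
          + (∑ k ∈ Finset.range (K + 1),
            (if 2*k+1 < K+1 then α (2*k+1) else 0) • ((Rᵀ * R) ^ k * Rᵀ * EU))
      = (∑ j ∈ Finset.range ((K+2)/2), α (2*j) • ((Rᵀ*R)^j * EI))
        + ∑ j ∈ Finset.range ((K+1)/2), α (2*j+1) • ((Rᵀ*R)^j * Rᵀ * EU) := by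
    rw [← e1, ← e2, Finset.sum_filter, Finset.sum_filter]
    simp only [ite_smul, zero_smul]
  have hL : (∑ k ∈ Finset.range (K + 1),
            (if 2*k+1 < K+1 then α (2*k+1) else 0) • ((Rᵀ * R) ^ k * EI))
          + (∑ k ∈ Finset.range (K + 1),
            (if 2*k+2 < K+1 then α (2*k+2) else 0) • ((Rᵀ * R) ^ k * Rᵀ * EU))
      = (∑ j ∈ Finset.range ((K+1)/2), α (2*j+1) • ((Rᵀ*R)^j * EI))
        + ∑ j ∈ Finset.range (K/2), α (2*j+2) • ((Rᵀ*R)^j * Rᵀ * EU) := by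
    rw [← e2, ← e3, Finset.sum_filter, Finset.sum_filter]
    simp only [ite_smul, zero_smul]
  have hP1 : (∑ k ∈ Finset.range (K + 1), α k • (fromBlocks 0 R Rᵀ 0) ^ k) * fromRows EU EI
      = ∑ k ∈ Finset.range (K + 1), α k • ((fromBlocks 0 R Rᵀ 0) ^ k * fromRows EU EI) := by
    rw [Matrix.sum_mul]; simp only [Matrix.smul_mul]
  have hT : toRows₁ ((∑ k ∈ Finset.range (K + 1), α k • (fromBlocks 0 R Rᵀ 0) ^ k)
        * fromRows EU EI)
      = (∑ j ∈ Finset.range ((K+2)/2), α (2*j) • ((R*Rᵀ)^j * EU))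
        + ∑ j ∈ Finset.range ((K+1)/2), α (2*j+1) • ((R*(Rᵀ*R)^j) * EI) := by
    rw [hP1, my_toRows₁_sum,
      my_sum_range_even_odd (fun k => toRows₁ (α k • ((fromBlocks 0 R Rᵀ 0) ^ k * fromRows EU EI))) (K+1)]
    congr 1
    · refine Finset.sum_congr rfl fun j _ => ?_
      rw [my_toRows₁_smul, my_blockpow_even, fromBlocks_mul_fromRows]
      simp
    · refine Finset.sum_congr rfl fun j _ => ?_
      rw [my_toRows₁_smul, my_blockpow_odd, fromBlocks_mul_fromRows]
      simp
  have hB : toRows₂ ((∑ k ∈ Finset.range (K + 1), α k • (fromBlocks 0 R Rᵀ 0) ^ k)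
        * fromRows EU EI)
      = (∑ j ∈ Finset.range ((K+2)/2), α (2*j) • ((Rᵀ*R)^j * EI))
        + ∑ j ∈ Finset.range ((K+1)/2), α (2*j+1) • ((Rᵀ*R)^j * Rᵀ * EU) := by
    rw [hP1, my_toRows₂_sum,
      my_sum_range_even_odd (fun k => toRows₂ (α k • ((fromBlocks 0 R Rᵀ 0) ^ k * fromRows EU EI))) (K+1)]
    congr 1
    · refine Finset.sum_congr rfl fun j _ => ?_
      rw [my_toRows₂_smul, my_blockpow_even, fromBlocks_mul_fromRows]
      simp
    · refine Finset.sum_congr rfl fun j _ => ?_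
      rw [my_toRows₂_smul, my_blockpow_odd, fromBlocks_mul_fromRows]
      simp [Matrix.mul_assoc]
  have hT2 : toRows₁ ((∑ k ∈ Finset.range (K + 1), α k • (fromBlocks 0 R Rᵀ 0) ^ k)
        * fromRows EU EI)
      = α 0 • EU + R * ((∑ j ∈ Finset.range ((K+1)/2), α (2*j+1) • ((Rᵀ*R)^j * EI))
        + ∑ j ∈ Finset.range (K/2), α (2*j+2) • ((Rᵀ*R)^j * Rᵀ * EU)) := by
    rw [hT, show (K+2)/2 = K/2+1 from by omega,
      Finset.sum_range_succ' (fun j => α (2*j) • ((R*Rᵀ)^j * EU)) (K/2),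
      Matrix.mul_add, Matrix.mul_sum, Matrix.mul_sum]
    simp only [Matrix.mul_smul, my_conjpow_succ, pow_zero, Matrix.one_mul, Matrix.mul_assoc,
      Nat.mul_zero, mul_zero, Nat.mul_succ]
    abel
  rw [hT2, hB, hV, hL, Matrix.add_mul, Matrix.smul_mul]

/-- Theorem 1 (general form): for a polynomial graph filter `P(Ã) = Σ_{k=0}^K α_k Ã^k`
applied to embeddings `E = [E_U; E_I]` with reconstruction
`R* = [P(Ã)E]_U ([P(Ã)E]_I)ᵀ`, there exist matrices `L, V ∈ ℝ^{n×d}`, each a linear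
combination (with coefficients determined only by `α_0, …, α_K`) of the matrices
`G̃_I^k E_I` and `G̃_I^k R̃ᵀ E_U` for `0 ≤ k ≤ K`, such that
`R* = α_0 • E_U Vᵀ + R̃ L Vᵀ`. -/
theorem reconstruction_factorization_general
    (K : ℕ) (α : ℕ → ℝ) :
    ∃ a b a' b' : ℕ → ℝ,
      ∀ (m n d : ℕ), 0 < m → 0 < n → 0 < d →
      ∀ (R : Matrix (Fin m) (Fin n) ℝ)
        (EU : Matrix (Fin m) (Fin d) ℝ) (EI : Matrix (Fin n) (Fin d) ℝ),
      let P := ∑ k ∈ Finset.range (K + 1), α k • (fromBlocks 0 R Rᵀ 0) ^ k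
      let L := (∑ k ∈ Finset.range (K + 1), a k • ((Rᵀ * R) ^ k * EI))
             + (∑ k ∈ Finset.range (K + 1), b k • ((Rᵀ * R) ^ k * Rᵀ * EU))
      let V := (∑ k ∈ Finset.range (K + 1), a' k • ((Rᵀ * R) ^ k * EI))
             + (∑ k ∈ Finset.range (K + 1), b' k • ((Rᵀ * R) ^ k * Rᵀ * EU))
      toRows₁ (P * fromRows EU EI) * (toRows₂ (P * fromRows EU EI))ᵀ
        = α 0 • (EU * Vᵀ) + R * L * Vᵀ := by
  refine ⟨fun k => if 2*k+1 < K+1 then α (2*k+1) else 0,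
          fun k => if 2*k+2 < K+1 then α (2*k+2) else 0,
          fun k => if 2*k < K+1 then α (2*k) else 0,
          fun k => if 2*k+1 < K+1 then α (2*k+1) else 0, ?_⟩
  intro m n d _hm _hn _hd R EU EI
  exact my_main K α R EU EI
end

section
/- (Theorem 1, factorized form.) Assume the constant coefficient α_0 = 0. Define the reconstructed matrix R* = [P(Ã)E]_U · ([P(Ã)E]_I)ᵀ ∈ ℝ^{m×n}, where P(Ã) = Σ_{k=0}^K α_k Ã^k, and [·]_U and [·]_I denote the top m rows and bottom n rows respectively. Then there exist matrices L, V ∈ ℝ^{n×d}, each a linear combination (with coefficients depending only on α_0, …, α_K) of the matrices G̃_I^k · E_I and G̃_I^k · R̃ᵀ · E_U for 0 ≤ k ≤ K, such that R* = R̃ · L · Vᵀ. -/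
/-!
Write `Ã = [[0, R], [S, 0]]`. Multiplying a row-partitioned matrix `X = [X₁; X₂]` by `Ã`
gives `[R X₂; S X₁]`, so the bottom block of `Ã^(2j) X` is `(S R)^j X₂` and that of
`Ã^(2j+1) X` is `(S R)^j S X₁`; no block powers need to be computed. Since `α₀ = 0`,
`P(Ã) = Ã Q(Ã)` with `Q` the shifted polynomial, so the top block of `P(Ã) E` is `R` times the
bottom block of `Q(Ã) E`. Both bottom blocks are combinations of `(RᵀR)^k E_I` and
`(RᵀR)^k Rᵀ E_U` with coefficients read off from the even and odd coefficients of `P` and `Q`;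
extending the coefficients of `P` by zero beyond `K` lets both be summed over `range (2 * (K + 1))`.
-/

open Matrix Finset

theorem Finset.sum_range_two_mul {M : Type*} [AddCommMonoid M] (f : ℕ → M) (N : ℕ) :
    ∑ k ∈ range (2 * N), f k = ∑ j ∈ range N, (f (2 * j) + f (2 * j + 1)) := by
  induction N with
  | zero => simp
  | succ N ih => rw [Nat.mul_succ, sum_range_succ, sum_range_succ, sum_range_succ, ih, add_assoc]

theorem Finset.sum_range_smul_pow_eq_mul_sum {α M : Type*} [CommSemiring α] [Semiring M]
    [Algebra α M] (a : M) (c : ℕ → α) (N : ℕ) (h₀ : c 0 = 0) (hN : c (N + 1) = 0) :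
    ∑ k ∈ range (N + 1), c k • a ^ k = a * ∑ k ∈ range (N + 1), c (k + 1) • a ^ k := by
  rw [sum_range_succ', sum_range_succ]
  simp only [h₀, hN, zero_smul, add_zero, mul_sum, pow_succ', mul_smul_comm]

namespace Matrix

variable {m n o : Type*} {α : Type*}

theorem toRows₂_sum [AddCommMonoid α] {ι : Type*} (s : Finset ι)
    (X : ι → Matrix (m ⊕ n) o α) :
    toRows₂ (∑ i ∈ s, X i) = ∑ i ∈ s, toRows₂ (X i) := by
  ext i j
  simp [toRows₂, sum_apply]

theorem toRows₂_smul {R : Type*} [SMul R α] (c : R) (X : Matrix (m ⊕ n) o α) :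
    toRows₂ (c • X) = c • toRows₂ X :=
  rfl

section Bipartite

variable [Fintype m] [Fintype n]

theorem toRows₁_fromBlocks_zero_mul [Semiring α] (R : Matrix m n α)
    (S : Matrix n m α) (X : Matrix (m ⊕ n) o α) :
    toRows₁ (fromBlocks 0 R S 0 * X) = R * toRows₂ X := by
  conv_lhs => rw [← fromRows_toRows X, fromBlocks_mul_fromRows]
  simp

theorem toRows₂_fromBlocks_zero_mul [Semiring α] (R : Matrix m n α)
    (S : Matrix n m α) (X : Matrix (m ⊕ n) o α) :
    toRows₂ (fromBlocks 0 R S 0 * X) = S * toRows₁ X := by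
  conv_lhs => rw [← fromRows_toRows X, fromBlocks_mul_fromRows]
  simp

variable [DecidableEq m] [DecidableEq n] [Semiring α]
  (R : Matrix m n α) (S : Matrix n m α) (X : Matrix (m ⊕ n) o α)

theorem toRows₂_fromBlocks_zero_pow_two_mul_mul (j : ℕ) :
    toRows₂ (fromBlocks 0 R S 0 ^ (2 * j) * X) = (S * R) ^ j * toRows₂ X := by
  induction j with
  | zero => simp
  | succ j ih =>
    rw [Nat.mul_succ, pow_succ', pow_succ', Matrix.mul_assoc, Matrix.mul_assoc,
      toRows₂_fromBlocks_zero_mul, toRows₁_fromBlocks_zero_mul, ih, pow_succ',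
      Matrix.mul_assoc, Matrix.mul_assoc]

theorem toRows₂_fromBlocks_zero_pow_two_mul_add_one_mul (j : ℕ) :
    toRows₂ (fromBlocks 0 R S 0 ^ (2 * j + 1) * X) = (S * R) ^ j * S * toRows₁ X := by
  rw [pow_succ, Matrix.mul_assoc, toRows₂_fromBlocks_zero_pow_two_mul_mul,
    toRows₂_fromBlocks_zero_mul, Matrix.mul_assoc]

theorem toRows₂_sum_smul_fromBlocks_zero_pow_mul (c : ℕ → α) (N : ℕ) :
    toRows₂ ((∑ k ∈ range (2 * N), c k • fromBlocks 0 R S 0 ^ k) * X)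
      = ∑ j ∈ range N, c (2 * j) • ((S * R) ^ j * toRows₂ X)
        + ∑ j ∈ range N, c (2 * j + 1) • ((S * R) ^ j * S * toRows₁ X) := by
  simp only [Matrix.sum_mul, Matrix.smul_mul, toRows₂_sum, toRows₂_smul]
  rw [sum_range_two_mul, sum_add_distrib]
  simp only [toRows₂_fromBlocks_zero_pow_two_mul_mul,
    toRows₂_fromBlocks_zero_pow_two_mul_add_one_mul]

end Bipartite

end Matrix

/-- Theorem 1 (factorized form): assuming the constant coefficient `α_0 = 0`, for the
polynomial graph filter `P(Ã) = Σ_{k=0}^K α_k Ã^k` applied to embeddings `E = [E_U; E_I]`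
with reconstruction `R* = [P(Ã)E]_U ([P(Ã)E]_I)ᵀ`, there exist matrices `L, V ∈ ℝ^{n×d}`,
each a linear combination (with coefficients determined only by `α_0, …, α_K`) of the
matrices `G̃_I^k E_I` and `G̃_I^k R̃ᵀ E_U` for `0 ≤ k ≤ K`, such that `R* = R̃ L Vᵀ`. -/
theorem reconstruction_factorization
    (K : ℕ) (α : ℕ → ℝ) (hα : α 0 = 0) :
    ∃ a b a' b' : ℕ → ℝ,
      ∀ (m n d : ℕ), 0 < m → 0 < n → 0 < d →
      ∀ (R : Matrix (Fin m) (Fin n) ℝ)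
        (EU : Matrix (Fin m) (Fin d) ℝ) (EI : Matrix (Fin n) (Fin d) ℝ),
      let P := ∑ k ∈ Finset.range (K + 1), α k • (fromBlocks 0 R Rᵀ 0) ^ k
      let L := (∑ k ∈ Finset.range (K + 1), a k • ((Rᵀ * R) ^ k * EI))
             + (∑ k ∈ Finset.range (K + 1), b k • ((Rᵀ * R) ^ k * Rᵀ * EU))
      let V := (∑ k ∈ Finset.range (K + 1), a' k • ((Rᵀ * R) ^ k * EI))
             + (∑ k ∈ Finset.range (K + 1), b' k • ((Rᵀ * R) ^ k * Rᵀ * EU))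
      toRows₁ (P * fromRows EU EI) * (toRows₂ (P * fromRows EU EI))ᵀ
        = R * L * Vᵀ := by
  set c : ℕ → ℝ := fun k => if k ≤ K then α k else 0 with hc
  refine ⟨fun j => c (2 * j + 1), fun j => c (2 * j + 2), fun j => c (2 * j),
    fun j => c (2 * j + 1), ?_⟩
  intro m n d _ _ _ R EU EI P L V
  have hP : P = ∑ k ∈ range (2 * (K + 1)), c k • fromBlocks 0 R Rᵀ 0 ^ k := by
    refine sum_subset_zero_on_sdiff (range_subset_range.2 (by omega)) ?_ ?_
    · intro k hk
      simp [hc, show ¬k ≤ K by simp at hk; omega]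
    · intro k hk
      simp [hc, Nat.lt_succ_iff.1 (mem_range.1 hk)]
  have hPshift : P = fromBlocks 0 R Rᵀ 0
      * ∑ k ∈ range (2 * (K + 1)), c (k + 1) • fromBlocks 0 R Rᵀ 0 ^ k := by
    rw [hP, show 2 * (K + 1) = 2 * K + 1 + 1 by ring,
      sum_range_smul_pow_eq_mul_sum _ _ _ (by simp [hc, hα]) (by simp [hc]; omega)]
  have hV : toRows₂ (P * fromRows EU EI) = V := by
    rw [hP, toRows₂_sum_smul_fromBlocks_zero_pow_mul, toRows₁_fromRows, toRows₂_fromRows]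
  have hL : toRows₁ (P * fromRows EU EI) = R * L := by
    rw [hPshift, Matrix.mul_assoc, toRows₁_fromBlocks_zero_mul,
      toRows₂_sum_smul_fromBlocks_zero_pow_mul, toRows₁_fromRows, toRows₂_fromRows]
  rw [hL, hV]
end

section
/- (Theorem 2, eigenvalue part — spectral invariance.) For any γ₁, γ₂ ∈ ℝ, the matrices G̃_I^{(γ₁)} and G̃_I^{(γ₂)} have equal characteristic polynomials; consequently, a complex number λ is an eigenvalue of G̃_I^{(γ₁)} if and only if it is an eigenvalue of G̃_I^{(γ₂)}, and likewise the Laplacians I − G̃_I^{(γ₁)} and I − G̃_I^{(γ₂)} share the same eigenvalues. -/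
open Matrix Polynomial

lemma charpoly_conj_aux {n : ℕ} (P Q M : Matrix (Fin n) (Fin n) ℝ)
    (hPQ : P * Q = 1) (hQP : Q * P = 1) :
    (P * M * Q).charpoly = M.charpoly := by
  have hPQ' : (C : ℝ →+* ℝ[X]).mapMatrix P * (C : ℝ →+* ℝ[X]).mapMatrix Q = 1 := by
    rw [← _root_.map_mul ((C : ℝ →+* ℝ[X]).mapMatrix), hPQ, _root_.map_one]
  have hc : ∀ A : Matrix (Fin n) (Fin n) ℝ[X],
      A * Matrix.scalar (Fin n) (X : ℝ[X]) = Matrix.scalar (Fin n) (X : ℝ[X]) * A :=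
    fun A => ((scalar_commute (X : ℝ[X]) (fun r => Commute.all _ r) A).eq).symm
  have key : charmatrix (P * M * Q) =
      (C : ℝ →+* ℝ[X]).mapMatrix P * charmatrix M * (C : ℝ →+* ℝ[X]).mapMatrix Q := by
    simp only [charmatrix, mul_sub, sub_mul]
    congr 1
    · rw [hc, mul_assoc, hPQ', mul_one]
    · rw [← _root_.map_mul ((C : ℝ →+* ℝ[X]).mapMatrix),
        ← _root_.map_mul ((C : ℝ →+* ℝ[X]).mapMatrix)]
  have hdet : ((C : ℝ →+* ℝ[X]).mapMatrix P).det * ((C : ℝ →+* ℝ[X]).mapMatrix Q).det = 1 := by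
    rw [← det_mul, hPQ', det_one]
  unfold Matrix.charpoly
  rw [key, det_mul, det_mul, mul_comm (((C : ℝ →+* ℝ[X]).mapMatrix P).det), mul_assoc, hdet,
    mul_one]

/-- Theorem 2 (eigenvalue part — spectral invariance): for any `γ₁ γ₂ : ℝ`, the
generalized normalized item Gram matrices `G̃_I^{(γ)} = D_I^{−γ} Rᵀ D_U^{−1} R D_I^{γ−1}`
have equal characteristic polynomials; consequently `λ ∈ ℂ` is an eigenvalue of
`G̃_I^{(γ₁)}` iff it is an eigenvalue of `G̃_I^{(γ₂)}`, and likewise the Laplacians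
`I − G̃_I^{(γ₁)}` and `I − G̃_I^{(γ₂)}` share the same eigenvalues. -/
theorem generalized_gram_spectral_invariance
    (m n : ℕ) (hm : 0 < m) (hn : 0 < n)
    (R : Matrix (Fin m) (Fin n) ℝ)
    (hR : ∀ u i, 0 ≤ R u i)
    (hdU : ∀ u, 0 < ∑ i, R u i)
    (hdI : ∀ i, 0 < ∑ u, R u i)
    (γ₁ γ₂ : ℝ) :
    let DI : ℝ → Matrix (Fin n) (Fin n) ℝ :=
      fun s => Matrix.diagonal (fun i => (∑ u, R u i) ^ s)
    let DU : ℝ → Matrix (Fin m) (Fin m) ℝ :=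
      fun s => Matrix.diagonal (fun u => (∑ i, R u i) ^ s)
    let G : ℝ → Matrix (Fin n) (Fin n) ℝ :=
      fun γ => DI (-γ) * Rᵀ * DU (-1) * R * DI (γ - 1)
    (G γ₁).charpoly = (G γ₂).charpoly ∧
    (∀ lam : ℂ, ((G γ₁).charpoly.map (algebraMap ℝ ℂ)).IsRoot lam ↔
        ((G γ₂).charpoly.map (algebraMap ℝ ℂ)).IsRoot lam) ∧
    (∀ lam : ℂ, ((1 - G γ₁).charpoly.map (algebraMap ℝ ℂ)).IsRoot lam ↔
        ((1 - G γ₂).charpoly.map (algebraMap ℝ ℂ)).IsRoot lam) := by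
  intro DI DU G
  -- key facts about DI powers
  have hDImul : ∀ s t : ℝ, DI s * DI t = DI (s + t) := by
    intro s t
    have h : (fun i => (∑ u, R u i) ^ s * (∑ u, R u i) ^ t)
        = fun i => (∑ u, R u i) ^ (s + t) :=
      funext fun i => (Real.rpow_add (hdI i) s t).symm
    simp only [DI, diagonal_mul_diagonal, h]
  have hDIinv : ∀ s : ℝ, DI s * DI (-s) = 1 := by
    intro s
    rw [hDImul]
    simp [DI, Real.rpow_natCast, diagonal_one]
  have hDIinv' : ∀ s : ℝ, DI (-s) * DI s = 1 := by
    intro s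
    rw [hDImul]
    simp [DI]
  -- G γ = DI(-γ) * M * DI γ where M = Rᵀ * DU(-1) * R * DI(-1)
  set M : Matrix (Fin n) (Fin n) ℝ := Rᵀ * DU (-1) * R * DI (-1) with hM
  have hG : ∀ γ : ℝ, G γ = DI (-γ) * M * DI γ := by
    intro γ
    have : DI (γ - 1) = DI (-1) * DI γ := by
      rw [hDImul]; ring_nf
    simp only [G, this, hM]
    simp only [Matrix.mul_assoc]
  have hGc : ∀ γ : ℝ, (G γ).charpoly = M.charpoly := by
    intro γ
    rw [hG γ]
    exact charpoly_conj_aux _ _ _ (hDIinv' γ) (hDIinv γ)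
  have hGL : ∀ γ : ℝ, (1 - G γ).charpoly = (1 - M).charpoly := by
    intro γ
    have : 1 - G γ = DI (-γ) * (1 - M) * DI γ := by
      rw [hG γ, mul_sub, sub_mul, mul_one, hDIinv']
    rw [this]
    exact charpoly_conj_aux _ _ _ (hDIinv' γ) (hDIinv γ)
  refine ⟨by rw [hGc, hGc], fun lam => by rw [hGc, hGc], fun lam => by rw [hGL, hGL]⟩
end

section
/- (Theorem 2, eigenvector part.) Let γ₁, γ₂ ∈ ℝ and let λ ∈ ℝ. If v ∈ ℝⁿ is a nonzero vector with G̃_I^{(γ₂)} · v = λ · v, then the vector u = D_I^{γ₂−γ₁} · v (where D_I^{s} is the diagonal matrix with entries d_I(i)^s) is nonzero and satisfies G̃_I^{(γ₁)} · u = λ · u. Thus eigenvectors of G̃_I^{(γ₁)} and G̃_I^{(γ₂)} for a common eigenvalue are related by multiplication by a power of the item degree matrix. -/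
open Matrix

/-- Theorem 2 (eigenvector part): if `v ≠ 0` satisfies `G̃_I^{(γ₂)} v = λ v`, then
`u = D_I^{γ₂−γ₁} v` is nonzero and satisfies `G̃_I^{(γ₁)} u = λ u`; i.e. eigenvectors for
a common eigenvalue are related by multiplication by a power of the item degree matrix. -/
theorem generalized_gram_eigenvector_transfer
    (m n : ℕ) (hm : 0 < m) (hn : 0 < n)
    (R : Matrix (Fin m) (Fin n) ℝ)
    (hR : ∀ u i, 0 ≤ R u i)
    (hdU : ∀ u, 0 < ∑ i, R u i)
    (hdI : ∀ i, 0 < ∑ u, R u i)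
    (γ₁ γ₂ lam : ℝ) (v : Fin n → ℝ) :
    let DI : ℝ → Matrix (Fin n) (Fin n) ℝ :=
      fun s => Matrix.diagonal (fun i => (∑ u, R u i) ^ s)
    let DU : ℝ → Matrix (Fin m) (Fin m) ℝ :=
      fun s => Matrix.diagonal (fun u => (∑ i, R u i) ^ s)
    let G : ℝ → Matrix (Fin n) (Fin n) ℝ :=
      fun γ => DI (-γ) * Rᵀ * DU (-1) * R * DI (γ - 1)
    v ≠ 0 → (G γ₂).mulVec v = lam • v →
      (DI (γ₂ - γ₁)).mulVec v ≠ 0 ∧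
        (G γ₁).mulVec ((DI (γ₂ - γ₁)).mulVec v) = lam • (DI (γ₂ - γ₁)).mulVec v := by
  intro DI DU G hv hG
  have hDImul : ∀ s t : ℝ, DI s * DI t = DI (s + t) := by
    intro s t
    simp only [DI, Matrix.diagonal_mul_diagonal]
    exact congrArg Matrix.diagonal (funext fun i => (Real.rpow_add (hdI i) s t).symm)
  constructor
  · intro h0
    apply hv
    funext i
    have h := congrFun h0 i
    simp only [DI, Matrix.mulVec_diagonal, Pi.zero_apply, mul_eq_zero] at h
    rcases h with h | h
    · exact absurd h (ne_of_gt (Real.rpow_pos_of_pos (hdI i) _))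
    · exact h
  · have e1 : γ₁ - 1 + (γ₂ - γ₁) = γ₂ - 1 := by ring
    have e2 : γ₂ - γ₁ + -γ₂ = -γ₁ := by ring
    have key : G γ₁ * DI (γ₂ - γ₁) = DI (γ₂ - γ₁) * G γ₂ := by
      simp only [G]
      rw [Matrix.mul_assoc (DI (-γ₁) * Rᵀ * DU (-1) * R) (DI (γ₁ - 1)) (DI (γ₂ - γ₁)),
        hDImul, e1, ← Matrix.mul_assoc, ← Matrix.mul_assoc, ← Matrix.mul_assoc,
        ← Matrix.mul_assoc, hDImul, e2]
    calc (G γ₁).mulVec ((DI (γ₂ - γ₁)).mulVec v)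
        = (G γ₁ * DI (γ₂ - γ₁)).mulVec v := by rw [Matrix.mulVec_mulVec]
      _ = (DI (γ₂ - γ₁) * G γ₂).mulVec v := by rw [key]
      _ = (DI (γ₂ - γ₁)).mulVec ((G γ₂).mulVec v) := by rw [Matrix.mulVec_mulVec]
      _ = (DI (γ₂ - γ₁)).mulVec (lam • v) := by rw [hG]
      _ = lam • (DI (γ₂ - γ₁)).mulVec v := by rw [Matrix.mulVec_smul]
end

section
/- (Theorem 2, eigenvalue bounds for all normalizations.) For every γ ∈ ℝ (in particular for every γ ∈ [0,1]), every complex eigenvalue λ of G̃_I^{(γ)} is real and satisfies 0 ≤ λ ≤ 1; equivalently, every eigenvalue μ of the generalized Laplacian L̃^{(γ)} = I − G̃_I^{(γ)} is real and satisfies 0 ≤ μ ≤ 1. -/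
/-!
Write `G_γ = D_I^{-γ} M D_I^{γ-1}` with `M = Rᵀ D_U⁻¹ R`. Since
`charpoly (X * Y) = charpoly (Y * X)`, the characteristic polynomial of `G_γ` is that of
`D_I⁻¹ M` for every `γ`, so all the `G_γ` have the same eigenvalues. At `γ = 1/2` the matrix is
`Bᵀ B` with `B = D_U^{-1/2} R D_I^{-1/2}`, which is positive semidefinite, so the eigenvalues are
real and nonnegative; at `γ = 1` it is row stochastic, so by Gershgorin's theorem they have
modulus at most `1`. The eigenvalues of the Laplacian `1 - G_γ` are the `1 - λ`.
-/

open Matrix Polynomial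
open scoped ComplexOrder

theorem Complex.mem_Icc_zero_one_iff {z : ℂ} :
    z ∈ Set.Icc (0 : ℂ) 1 ↔ z.im = 0 ∧ 0 ≤ z.re ∧ z.re ≤ 1 := by
  simp only [Set.mem_Icc, Complex.le_def, Complex.zero_re, Complex.zero_im, Complex.one_re,
    Complex.one_im]
  tauto

namespace Matrix

theorem posSemidef_map_transpose_mul_self {m n 𝕜 : Type*} [Fintype m] [Fintype n] [RCLike 𝕜]
    (B : Matrix m n ℝ) :
    ((Bᵀ * B).map (algebraMap ℝ 𝕜)).PosSemidef := by
  have htranspose : Bᵀ.map (algebraMap ℝ 𝕜) = (B.map (algebraMap ℝ 𝕜))ᴴ := by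
    ext i j
    simp
  rw [Matrix.map_mul, htranspose]
  exact posSemidef_conjTranspose_mul_self _

variable {n : Type*} [Fintype n] [DecidableEq n]

theorem isRoot_charpoly_one_sub_iff {K : Type*} [CommRing K] [IsDomain K] (A : Matrix n n K)
    (μ : K) :
    (1 - A).charpoly.IsRoot μ ↔ A.charpoly.IsRoot (1 - μ) := by
  have h : scalar n μ - (1 - A) = -(scalar n (1 - μ) - A) := by
    rw [map_sub, map_one]; abel
  simp only [IsRoot.def, eval_charpoly, h, det_neg, mul_eq_zero, pow_eq_zero_iff', neg_eq_zero,
    one_ne_zero, false_and, false_or]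

theorem PosSemidef.nonneg_of_isRoot_charpoly {𝕜 : Type*} [RCLike 𝕜] {A : Matrix n n 𝕜}
    (hA : A.PosSemidef) {μ : 𝕜} (hμ : A.charpoly.IsRoot μ) : 0 ≤ μ := by
  rw [← mem_roots (charpoly_monic A).ne_zero, hA.isHermitian.roots_charpoly_eq_eigenvalues] at hμ
  obtain ⟨i, -, rfl⟩ := Multiset.mem_map.mp hμ
  exact RCLike.ofReal_nonneg.mpr (hA.eigenvalues_nonneg i)

theorem norm_le_one_of_isRoot_charpoly_of_mem_rowStochastic {A : Matrix n n ℝ}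
    (hA : A ∈ rowStochastic ℝ n) {μ : ℂ} (hμ : (A.charpoly.map (algebraMap ℝ ℂ)).IsRoot μ) :
    ‖μ‖ ≤ 1 := by
  rw [← charpoly_map, ← charpoly_toLin', ← Module.End.hasEigenvalue_iff_isRoot_charpoly] at hμ
  obtain ⟨k, hk⟩ := eigenvalue_mem_ball hμ
  have hnorm : ∀ j, ‖A.map (algebraMap ℝ ℂ) k j‖ = A k j := fun j => by
    simp [abs_of_nonneg (nonneg_of_mem_rowStochastic hA)]
  calc ‖μ‖ ≤ A k k + ∑ j ∈ Finset.univ.erase k, A k j := by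
        simpa only [hnorm] using norm_le_of_mem_closedBall hk
    _ = 1 := by rw [Finset.add_sum_erase _ _ (Finset.mem_univ k), sum_row_of_mem_rowStochastic hA]

end Matrix

section NormalizedGram

variable {m n : Type*} [Fintype m] [Fintype n] [DecidableEq m] [DecidableEq n]

theorem charpoly_diagonal_rpow_mul_mul_diagonal_rpow {d : n → ℝ} (hd : ∀ i, 0 < d i)
    (M : Matrix n n ℝ) (γ : ℝ) :
    (diagonal (fun i => d i ^ (-γ)) * M * diagonal (fun i => d i ^ (γ - 1))).charpoly =
      (diagonal (fun i => d i ^ (-1 : ℝ)) * M).charpoly := by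
  rw [charpoly_mul_comm, ← Matrix.mul_assoc, diagonal_mul_diagonal]
  congr 3
  ext i
  rw [← Real.rpow_add (hd i)]
  ring_nf

variable (R : Matrix m n ℝ)

noncomputable def normalizedGram (γ : ℝ) : Matrix n n ℝ :=
  diagonal (fun i => (∑ u, R u i) ^ (-γ)) * Rᵀ * diagonal (fun u => (∑ i, R u i) ^ (-1 : ℝ)) * R *
    diagonal (fun i => (∑ u, R u i) ^ (γ - 1))

variable {R}

theorem normalizedGram_apply (γ : ℝ) (i j : n) :
    normalizedGram R γ i j = (∑ u, R u i) ^ (-γ) *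
      (∑ u, R u i * (∑ k, R u k) ^ (-1 : ℝ) * R u j) * (∑ u, R u j) ^ (γ - 1) := by
  rw [normalizedGram, mul_diagonal, mul_apply, Finset.mul_sum, Finset.sum_mul, Finset.sum_mul]
  simp only [mul_diagonal, diagonal_mul, transpose_apply, mul_assoc]

theorem charpoly_normalizedGram_eq (hdI : ∀ i, 0 < ∑ u, R u i) (γ γ' : ℝ) :
    (normalizedGram R γ).charpoly = (normalizedGram R γ').charpoly := by
  have h (γ : ℝ) : normalizedGram R γ = diagonal (fun i => (∑ u, R u i) ^ (-γ)) *
      (Rᵀ * diagonal (fun u => (∑ i, R u i) ^ (-1 : ℝ)) * R) *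
      diagonal (fun i => (∑ u, R u i) ^ (γ - 1)) := by
    simp only [normalizedGram, Matrix.mul_assoc]
  rw [h, h, charpoly_diagonal_rpow_mul_mul_diagonal_rpow hdI,
    charpoly_diagonal_rpow_mul_mul_diagonal_rpow hdI]

theorem normalizedGram_half_eq_transpose_mul_self (hdU : ∀ u, 0 < ∑ i, R u i) :
    normalizedGram R (1 / 2) =
      (diagonal (fun u => (∑ i, R u i) ^ (-1 / 2 : ℝ)) * R *
        diagonal (fun i => (∑ u, R u i) ^ (-1 / 2 : ℝ)))ᵀ *
      (diagonal (fun u => (∑ i, R u i) ^ (-1 / 2 : ℝ)) * R *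
        diagonal (fun i => (∑ u, R u i) ^ (-1 / 2 : ℝ))) := by
  have hU : diagonal (fun u => (∑ i, R u i) ^ (-1 / 2 : ℝ)) *
      diagonal (fun u => (∑ i, R u i) ^ (-1 / 2 : ℝ)) =
      diagonal (fun u => (∑ i, R u i) ^ (-1 : ℝ)) := by
    rw [diagonal_mul_diagonal]
    congr 1
    ext u
    rw [← Real.rpow_add (hdU u)]
    norm_num
  rw [normalizedGram, transpose_mul, transpose_mul, diagonal_transpose, diagonal_transpose]
  simp only [Matrix.mul_assoc]
  rw [← Matrix.mul_assoc (diagonal _) (diagonal _), hU]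
  norm_num

theorem normalizedGram_one_mem_rowStochastic (hR : ∀ u i, 0 ≤ R u i)
    (hdU : ∀ u, 0 < ∑ i, R u i) (hdI : ∀ i, 0 < ∑ u, R u i) :
    normalizedGram R 1 ∈ rowStochastic ℝ n := by
  rw [mem_rowStochastic_iff_sum]
  simp only [normalizedGram_apply, sub_self, Real.rpow_zero, mul_one, Real.rpow_neg_one]
  refine ⟨fun i j => ?_, fun i => ?_⟩
  · exact mul_nonneg (inv_nonneg.2 (hdI i).le) (Finset.sum_nonneg fun u _ =>
      mul_nonneg (mul_nonneg (hR u i) (inv_nonneg.2 (hdU u).le)) (hR u j))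
  · calc ∑ j, (∑ u, R u i)⁻¹ * ∑ u, R u i * (∑ k, R u k)⁻¹ * R u j
        = (∑ u, R u i)⁻¹ * ∑ u, R u i * ((∑ k, R u k)⁻¹ * ∑ j, R u j) := by
          rw [← Finset.mul_sum, Finset.sum_comm]
          simp only [Finset.mul_sum, mul_assoc]
      _ = 1 := by
          simp only [inv_mul_cancel₀ (hdU _).ne', mul_one]
          exact inv_mul_cancel₀ (hdI i).ne'

theorem mem_Icc_of_isRoot_charpoly_normalizedGram (hR : ∀ u i, 0 ≤ R u i)
    (hdU : ∀ u, 0 < ∑ i, R u i) (hdI : ∀ i, 0 < ∑ u, R u i) (γ : ℝ) {μ : ℂ}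
    (hμ : ((normalizedGram R γ).charpoly.map (algebraMap ℝ ℂ)).IsRoot μ) : μ ∈ Set.Icc 0 1 := by
  have hnonneg : 0 ≤ μ := by
    rw [charpoly_normalizedGram_eq hdI γ (1 / 2), normalizedGram_half_eq_transpose_mul_self hdU,
      ← charpoly_map] at hμ
    exact (posSemidef_map_transpose_mul_self _).nonneg_of_isRoot_charpoly hμ
  have hnorm : ‖μ‖ ≤ 1 := by
    rw [charpoly_normalizedGram_eq hdI γ 1] at hμ
    exact norm_le_one_of_isRoot_charpoly_of_mem_rowStochastic
      (normalizedGram_one_mem_rowStochastic hR hdU hdI) hμ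
  obtain ⟨hre, him⟩ := Complex.nonneg_iff.mp hnonneg
  exact Complex.mem_Icc_zero_one_iff.mpr ⟨him.symm, hre, (Complex.re_le_norm μ).trans hnorm⟩

end NormalizedGram

theorem generalized_gram_eigenvalues_in_unit_interval_general
    (m n : ℕ)
    (R : Matrix (Fin m) (Fin n) ℝ)
    (hR : ∀ u i, 0 ≤ R u i)
    (hdU : ∀ u, 0 < ∑ i, R u i)
    (hdI : ∀ i, 0 < ∑ u, R u i)
    (γ : ℝ) :
    let DI : ℝ → Matrix (Fin n) (Fin n) ℝ :=
      fun s => Matrix.diagonal (fun i => (∑ u, R u i) ^ s)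
    let DU : ℝ → Matrix (Fin m) (Fin m) ℝ :=
      fun s => Matrix.diagonal (fun u => (∑ i, R u i) ^ s)
    let G := DI (-γ) * Rᵀ * DU (-1) * R * DI (γ - 1)
    (∀ lam : ℂ, (G.charpoly.map (algebraMap ℝ ℂ)).IsRoot lam →
        lam.im = 0 ∧ 0 ≤ lam.re ∧ lam.re ≤ 1) ∧
    (∀ mu : ℂ, ((1 - G).charpoly.map (algebraMap ℝ ℂ)).IsRoot mu →
        mu.im = 0 ∧ 0 ≤ mu.re ∧ mu.re ≤ 1) := by
  intro DI DU G
  have hG (lam : ℂ) (h : (G.charpoly.map (algebraMap ℝ ℂ)).IsRoot lam) : lam ∈ Set.Icc 0 1 :=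
    mem_Icc_of_isRoot_charpoly_normalizedGram hR hdU hdI γ h
  refine ⟨fun lam h => Complex.mem_Icc_zero_one_iff.mp (hG lam h), fun mu h => ?_⟩
  rw [← charpoly_map, Matrix.map_sub _ (map_sub _), Matrix.map_one _ (map_zero _) (map_one _),
    isRoot_charpoly_one_sub_iff, charpoly_map] at h
  obtain ⟨h0, h1⟩ := hG _ h
  exact Complex.mem_Icc_zero_one_iff.mp ⟨(sub_le_self_iff 1).mp h1, sub_nonneg.mp h0⟩

/-- Theorem 2 (eigenvalue bounds for all normalizations): for every `γ : ℝ`, every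
complex eigenvalue `λ` of `G̃_I^{(γ)} = D_I^{−γ} Rᵀ D_U^{−1} R D_I^{γ−1}` (a root of its
characteristic polynomial over `ℂ`) is real and satisfies `0 ≤ λ ≤ 1`; equivalently,
every eigenvalue `μ` of the generalized Laplacian `L̃^{(γ)} = I − G̃_I^{(γ)}` is real
and satisfies `0 ≤ μ ≤ 1`. -/
theorem generalized_gram_eigenvalues_in_unit_interval
    (m n : ℕ) (hm : 0 < m) (hn : 0 < n)
    (R : Matrix (Fin m) (Fin n) ℝ)
    (hR : ∀ u i, 0 ≤ R u i)
    (hdU : ∀ u, 0 < ∑ i, R u i)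
    (hdI : ∀ i, 0 < ∑ u, R u i)
    (γ : ℝ) :
    let DI : ℝ → Matrix (Fin n) (Fin n) ℝ :=
      fun s => Matrix.diagonal (fun i => (∑ u, R u i) ^ s)
    let DU : ℝ → Matrix (Fin m) (Fin m) ℝ :=
      fun s => Matrix.diagonal (fun u => (∑ i, R u i) ^ s)
    let G := DI (-γ) * Rᵀ * DU (-1) * R * DI (γ - 1)
    (∀ lam : ℂ, (G.charpoly.map (algebraMap ℝ ℂ)).IsRoot lam →
        lam.im = 0 ∧ 0 ≤ lam.re ∧ lam.re ≤ 1) ∧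
    (∀ mu : ℂ, ((1 - G).charpoly.map (algebraMap ℝ ℂ)).IsRoot mu →
        mu.im = 0 ∧ 0 ≤ mu.re ∧ mu.re ≤ 1) :=
  generalized_gram_eigenvalues_in_unit_interval_general m n R hR hdU hdI γ
end
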